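/- Let 𝔄 be a unital C*-algebra, ω a state on 𝔄, U a unitary in 𝔄, and s ∈ [0,1]. Then sU + (1-s)·1 lies in the Gelfand ideal of ω if and only if ω(U) = -1 and s = 1/2. -/

import Mathlib

/-!
Since `U⋆U = 1`, the element `X = sU + (1-s)1` satisfies
`X⋆X = (s² + (1-s)²)1 + s(1-s)(U + U⋆)`, and a state is real on selfadjoint elements, so
`ω(X⋆X) = (2s-1)² + 2s(1-s)(1 + Re ω(U))`. Both summands are nonnegative because
`|ω(U)|² ≤ ω(U⋆U) = 1`, so `ω(X⋆X) = 0` forces `s = 1/2` and `Re ω(U) = -1`, hence `ω(U) = -1`.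
-/

open scoped ComplexOrder

/-- A state on a unital C*-algebra: a positive unital linear functional. -/
def IsState {A : Type*} [CStarAlgebra A] [NormedAlgebra ℂ A] [StarModule ℂ A]
    (φ : A →L[ℂ] ℂ) : Prop :=
  (∀ a : A, 0 ≤ φ (star a * a)) ∧ φ 1 = 1

open ComplexConjugate ComplexStarModule

section PositiveFunctional

variable {A F : Type*} [Ring A] [StarRing A] [Module ℂ A] [FunLike F A ℂ]
  [LinearMapClass F ℂ A ℂ] {ω : F}

theorem im_apply_eq_zero_of_isSelfAdjoint (hpos : ∀ a : A, 0 ≤ ω (star a * a)) {h : A}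
    (hh : IsSelfAdjoint h) : (ω h).im = 0 := by
  have him (a : A) : (ω (star a * a)).im = 0 := (Complex.nonneg_iff.mp (hpos a)).2.symm
  have hsq : star (h + 1) * (h + 1) = star h * h + h + h + star 1 * 1 := by
    rw [star_add, star_one, hh.star_eq]
    noncomm_ring
  have := him (h + 1)
  rw [hsq, map_add, map_add, map_add, Complex.add_im, Complex.add_im, Complex.add_im, him,
    him] at this
  linarith

theorem apply_star_eq_conj [StarModule ℂ A] (hpos : ∀ a : A, 0 ≤ ω (star a * a)) (a : A) :
    ω (star a) = conj (ω a) := by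
  have hre := im_apply_eq_zero_of_isSelfAdjoint hpos (ℜ a).property
  have him := im_apply_eq_zero_of_isSelfAdjoint hpos (ℑ a).property
  rw [← realPart_add_I_smul_imaginaryPart a, star_add, star_smul, (ℜ a).property.star_eq,
    (ℑ a).property.star_eq]
  apply Complex.ext <;> simp [hre, him]

variable [IsScalarTower ℂ A A] [SMulCommClass ℂ A A] [StarModule ℂ A]

theorem sq_norm_apply_le_re_apply_star_mul_self (hpos : ∀ a : A, 0 ≤ ω (star a * a))
    (h1 : ω 1 = 1) (a : A) : ‖ω a‖ ^ 2 ≤ (ω (star a * a)).re := by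
  set z := ω a
  have hsq : star (a - z • 1) * (a - z • 1) =
      star a * a - z • star a - conj z • a + (conj z * z) • 1 := by
    simp only [star_sub, star_smul, star_one, sub_mul, mul_sub, smul_mul_assoc, mul_smul_comm,
      one_mul, mul_one, Complex.star_def]
    module
  have := (Complex.nonneg_iff.mp (hpos (a - z • 1))).1
  rw [hsq, map_add, map_sub, map_sub, map_smul, map_smul, map_smul, apply_star_eq_conj hpos,
    h1] at this
  rw [Complex.sq_norm, Complex.normSq_apply]
  simpa [z] using this

theorem norm_apply_le_one_of_star_mul_self_eq_one (hpos : ∀ a : A, 0 ≤ ω (star a * a))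
    (h1 : ω 1 = 1) {U : A} (hU : star U * U = 1) : ‖ω U‖ ≤ 1 := by
  have := sq_norm_apply_le_re_apply_star_mul_self hpos h1 U
  rw [hU, h1, Complex.one_re] at this
  nlinarith [norm_nonneg (ω U)]

end PositiveFunctional

theorem map_ofReal_smul {E F G : Type*} [SeminormedRing E] [NormedAlgebra ℂ E] [AddCommGroup F]
    [Module ℝ F] [TopologicalSpace F] [ContinuousSMul ℝ F] [T2Space F] [FunLike G E F]
    [AddMonoidHomClass G E F] (f : G) (hf : Continuous f) (r : ℝ) (x : E) :
    f ((r : ℂ) • x) = r • f x := by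
  let g : ℝ →+ F := AddMonoidHom.mk' (fun t : ℝ => f ((t : ℂ) • x)) fun t u => by
    simp [add_smul]
  have hg : Continuous g := hf.comp (Complex.continuous_ofReal.smul continuous_const)
  simpa [g] using map_real_smul g hg r 1

theorem star_ofReal_smul_add_ofReal_smul_one_mul_self {R : Type*} [Ring R] [StarRing R]
    [Algebra ℂ R] [StarModule ℂ R] {U : R} (hU : star U * U = 1) (s t : ℝ) :
    star ((s : ℂ) • U + (t : ℂ) • 1) * ((s : ℂ) • U + (t : ℂ) • 1) =
      ((s ^ 2 + t ^ 2 : ℝ) : ℂ) • 1 + ((s * t : ℝ) : ℂ) • (U + star U) := by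
  simp only [star_add, star_smul, star_one, Complex.star_def, Complex.conj_ofReal, add_mul,
    mul_add, smul_mul_smul, hU, one_mul, mul_one]
  push_cast
  module

theorem sq_add_sq_add_two_mul_mul_re_eq_zero_iff {s : ℝ} (hs : s ∈ Set.Icc (0 : ℝ) 1) {z : ℂ}
    (hz : ‖z‖ ≤ 1) : s ^ 2 + (1 - s) ^ 2 + 2 * (s * (1 - s)) * z.re = 0 ↔ z = -1 ∧ s = 1 / 2 := by
  obtain ⟨hs0, hs1⟩ := hs
  have hre : 0 ≤ 1 + z.re := by linarith [neg_abs_le z.re, Complex.abs_re_le_norm z]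
  rw [show s ^ 2 + (1 - s) ^ 2 + 2 * (s * (1 - s)) * z.re =
      (2 * s - 1) ^ 2 + 2 * (s * (1 - s)) * (1 + z.re) by ring,
    add_eq_zero_iff_of_nonneg (sq_nonneg _) (by positivity)]
  constructor
  · rintro ⟨hsq, hmul⟩
    have hs : s = 1 / 2 := by linarith [pow_eq_zero_iff (n := 2) two_ne_zero |>.mp hsq]
    subst hs
    have hre : z.re = -1 := by linarith
    have him : z.im = 0 := by
      have := Complex.sq_norm z
      rw [Complex.normSq_apply, hre] at this
      nlinarith [norm_nonneg z]
    exact ⟨Complex.ext (by simpa using hre) (by simpa using him), rfl⟩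
  · rintro ⟨rfl, rfl⟩
    norm_num

theorem stmt_3_general {𝔄 : Type*} [CStarAlgebra 𝔄] [NormedAlgebra ℂ 𝔄] [StarModule ℂ 𝔄]
    (ω : 𝔄 →L[ℂ] ℂ) (hω : IsState ω)
    (U : 𝔄) (hU₁ : star U * U = 1) :
    ∀ s : ℝ, s ∈ Set.Icc (0 : ℝ) 1 →
      (ω (star ((s : ℂ) • U + ((1 : ℂ) - (s : ℂ)) • 1) *
          ((s : ℂ) • U + ((1 : ℂ) - (s : ℂ)) • 1)) = 0 ↔
        ω U = -1 ∧ s = 1 / 2) := by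
  obtain ⟨hpos, h1⟩ := hω
  intro s hs
  -- The scalar action in the statement comes from the separate instance `NormedAlgebra ℂ 𝔄`,
  -- for which `ω` need not be `ℂ`-linear; real scalars still pass through `ω` by continuity.
  have hsmul : ∀ (r : ℝ) (x : 𝔄), ω ((r : ℂ) • x) = r • ω x := map_ofReal_smul ω ω.continuous
  have hcast : (1 : ℂ) - s = ((1 - s : ℝ) : ℂ) := by push_cast; rfl
  have hexpand : ω (star ((s : ℂ) • U + ((1 - s : ℝ) : ℂ) • 1) *
      ((s : ℂ) • U + ((1 - s : ℝ) : ℂ) • 1)) =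
      ((s ^ 2 + (1 - s) ^ 2 + 2 * (s * (1 - s)) * (ω U).re : ℝ) : ℂ) := by
    rw [star_ofReal_smul_add_ofReal_smul_one_mul_self hU₁, map_add, hsmul, hsmul, map_add,
      apply_star_eq_conj hpos, h1, Complex.add_conj]
    simp only [Complex.real_smul]
    push_cast
    ring
  rw [hcast, hexpand, Complex.ofReal_eq_zero]
  exact sq_add_sq_add_two_mul_mul_re_eq_zero_iff hs
    (norm_apply_le_one_of_star_mul_self_eq_one hpos h1 hU₁)

/-- If `ω` is a state on a unital C*-algebra, `U` a unitary and `s ∈ [0,1]`, then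
`s•U + (1-s)•1` lies in the Gelfand ideal of `ω` if and only if `ω U = -1` and `s = 1/2`. -/
theorem stmt_3 {𝔄 : Type*} [CStarAlgebra 𝔄] [NormedAlgebra ℂ 𝔄] [StarModule ℂ 𝔄]
    (ω : 𝔄 →L[ℂ] ℂ) (hω : IsState ω)
    (U : 𝔄) (hU₁ : star U * U = 1) (hU₂ : U * star U = 1) :
    ∀ s : ℝ, s ∈ Set.Icc (0 : ℝ) 1 →
      (ω (star ((s : ℂ) • U + ((1 : ℂ) - (s : ℂ)) • 1) *
          ((s : ℂ) • U + ((1 : ℂ) - (s : ℂ)) • 1)) = 0 ↔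
        ω U = -1 ∧ s = 1 / 2) :=
  stmt_3_general ω hω U hU₁
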